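/- (TCB-execution-protection FSM satisfies LTL(11), atomicity protection.) Consider the five-state Mealy machine of Figure 8 with states {NotTCB, Entry, InTCB, Exit, RESET}, inputs in(t) = (PC(t), irq(t), DMA_en(t)), and transition function δ: δ(NotTCB, in) = NotTCB if PC < TCB_min ∨ PC > TCB_max; Entry if PC = TCB_min ∧ ¬irq ∧ ¬DMA_en; RESET otherwise. δ(Entry, in) = Entry if PC = TCB_min ∧ ¬irq ∧ ¬DMA_en; InTCB if TCB_min < PC < TCB_max ∧ ¬irq ∧ ¬DMA_en; RESET otherwise. δ(InTCB, in) = InTCB if TCB_min < PC < TCB_max ∧ ¬irq ∧ ¬DMA_en; Exit if PC = TCB_max ∧ ¬irq ∧ ¬DMA_en; RESET otherwise. δ(Exit, in) = Exit if PC = TCB_max ∧ ¬irq ∧ ¬DMA_en; NotTCB if (PC < TCB_min ∨ PC > TCB_max) ∧ ¬irq ∧ ¬DMA_en; RESET otherwise. δ(RESET, in) = NotTCB if PC = 0 and RESET otherwise. The state trace is q(t+1) = δ(q(t), in(t)) and the output is reset(t) := (δ(q(t), in(t)) = RESET). Then for every initial state q(0) and every input trace, the output satisfies LTL(11): for every time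 t, if PC(t) ∈ TCB ∧ (irq(t) ∨ DMA_en(t)), then reset(t). -/
import Mathlib


/-- States of the five-state TCB-execution-protection Mealy machine of Figure 8. -/
inductive TcbState
  | NotTCB
  | Entry
  | InTCB
  | Exit
  | RESET
deriving DecidableEq

open Classical in
/-- Transition function of the Mealy machine of Figure 8, parameterized by
the TCB boundaries `TCB_min`, `TCB_max` and the current inputs
`(PC, irq, DMA_en)`. -/
noncomputable def tcbDelta (TCB_min TCB_max pc : ℕ) (irq dma : Prop) :
    TcbState → TcbState
  | .NotTCB =>
      if pc < TCB_min ∨ pc > TCB_max then .NotTCB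
      else if pc = TCB_min ∧ ¬ irq ∧ ¬ dma then .Entry
      else .RESET
  | .Entry =>
      if pc = TCB_min ∧ ¬ irq ∧ ¬ dma then .Entry
      else if (TCB_min < pc ∧ pc < TCB_max) ∧ ¬ irq ∧ ¬ dma then .InTCB
      else .RESET
  | .InTCB =>
      if (TCB_min < pc ∧ pc < TCB_max) ∧ ¬ irq ∧ ¬ dma then .InTCB
      else if pc = TCB_max ∧ ¬ irq ∧ ¬ dma then .Exit
      else .RESET
  | .Exit =>
      if pc = TCB_max ∧ ¬ irq ∧ ¬ dma then .Exit
      else if (pc < TCB_min ∨ pc > TCB_max) ∧ ¬ irq ∧ ¬ dma then .NotTCB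
      else .RESET
  | .RESET =>
      if pc = 0 then .NotTCB else .RESET

/-- (TCB-execution-protection FSM satisfies LTL(11), atomicity protection.) -/
theorem tcb_fsm_satisfies_LTL11
    (TCB_min TCB_max : ℕ) (hpos : 0 < TCB_min) (hle : TCB_min ≤ TCB_max)
    -- the TCB region is the interval [TCB_min, TCB_max]
    (TCB : Set ℕ) (hTCB : TCB = {a : ℕ | TCB_min ≤ a ∧ a ≤ TCB_max})
    (PC : ℕ → ℕ) (irq DMA_en : ℕ → Prop)
    (q : ℕ → TcbState)
    -- state trace: q(t+1) = δ(q(t), in(t))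
    (hstep : ∀ t, q (t + 1) = tcbDelta TCB_min TCB_max (PC t) (irq t) (DMA_en t) (q t))
    -- output reset(t) := (δ(q(t), in(t)) = RESET)
    (reset : ℕ → Prop)
    (hreset : ∀ t, reset t ↔
      tcbDelta TCB_min TCB_max (PC t) (irq t) (DMA_en t) (q t) = TcbState.RESET) :
    ∀ t, PC t ∈ TCB → (irq t ∨ DMA_en t) → reset t := by
  intro t hpc hid
  rw [hTCB] at hpc
  obtain ⟨h1, h2⟩ := hpc
  have hnid : ¬ (¬ irq t ∧ ¬ DMA_en t) := by tauto
  have hpc0 : PC t ≠ 0 := by omega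
  have hnot : ¬ (PC t < TCB_min ∨ PC t > TCB_max) := by omega
  rw [hreset]
  cases hq : q t <;> simp only [tcbDelta] <;> split <;> (try split) <;>
    first | rfl | (exfalso; omega) | (exfalso; tauto)
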